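/- Fix an integer n ≥ 1. Let P and Q be coprime real polynomials of degree exactly 2n that are strictly positive at every point of ℝ, and let θ : ℝ → ℝ be Lebesgue-measurable with θ(x) > 0 for all x and ∫ (1+|x|^{2n}) θ(x) dx < ∞. If u, v ∈ V_{2n−1} satisfy ∫_ℝ x^k ( u(x)/P(x) − v(x)/Q(x) ) θ(x) dx = 0 for every k = 0, 1, …, 2n and ∫_ℝ x^k ( u(x)Q(x) − v(x)P(x) ) θ(x)/Q(x)² dx = 0 for every k = 0, 1, …, 2n, then u = 0 and v = 0. -/

import Mathlib

/-!
Put `R = u Q - v P`. The two families of moment conditions say that `R θ / (P Q)` and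
`R θ / Q²` are orthogonal to every polynomial of degree `≤ 2n` (all integrals converge because a
rational function whose numerator exceeds the denominator in degree by at most `2n` is bounded by
a multiple of `1 + |x|^{2n}`). As `P, Q` are coprime and `deg R < 4n`, `R = A P + B Q` with
`deg A, deg B < 2n`, hence `∫ R² θ / (P Q²) = ∫ A · R θ / Q² + ∫ B · R θ / (P Q) = 0`, and
`R = 0` because the weight is positive. Then `P ∣ u Q` gives `P ∣ u`, so `u = 0` by degree,
and then `v = 0`.
-/

open MeasureTheory Polynomial Filter Bornology Asymptotics Set

theorem IsCoprime.exists_mul_add_mul_eq_of_degree_lt {K : Type*} [Field K] {P Q R : K[X]}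
    (h : IsCoprime P Q) (hR : R.degree < P.degree + Q.degree) :
    ∃ A B : K[X], A * P + B * Q = R ∧ A.degree < Q.degree ∧ B.degree < P.degree := by
  have hP : P ≠ 0 := by rintro rfl; simp at hR
  have hQ : Q ≠ 0 := by rintro rfl; simp at hR
  obtain ⟨a, b, hab⟩ := h
  set A := R * a % Q
  set B := R * a / Q * P + R * b
  have hAB : A * P + B * Q = R := by
    calc A * P + B * Q = (R * a % Q + Q * (R * a / Q)) * P + R * b * Q := by ring
      _ = R * (a * P + b * Q) := by rw [EuclideanDomain.mod_add_div]; ring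
      _ = R := by rw [hab, mul_one]
  have hA : A.degree < Q.degree := degree_mod_lt _ hQ
  refine ⟨A, B, hAB, hA, ?_⟩
  have hBQ : (B * Q).degree < P.degree + Q.degree := by
    rw [eq_sub_of_add_eq' hAB]
    refine (degree_sub_le _ _).trans_lt (max_lt hR ?_)
    rw [degree_mul, add_comm P.degree]
    exact WithBot.add_lt_add_right (degree_ne_bot.2 hP) hA
  rwa [degree_mul, WithBot.add_lt_add_iff_right (degree_ne_bot.2 hQ)] at hBQ

theorem IsCoprime.eq_zero_of_mul_eq_mul_of_degree_lt {R : Type*} [CommRing R] [IsDomain R]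
    {P Q u v : R[X]} (h : IsCoprime P Q) (hu : u.degree < P.degree) (huv : u * Q = v * P) :
    u = 0 ∧ v = 0 := by
  have hu0 : u = 0 :=
    eq_zero_of_dvd_of_degree_lt (h.dvd_of_dvd_mul_right ⟨v, by rw [huv, mul_comm]⟩) hu
  have hP : P ≠ 0 := ne_zero_of_degree_gt hu
  refine ⟨hu0, ?_⟩
  rw [hu0, zero_mul, eq_comm, mul_eq_zero] at huv
  exact huv.resolve_right hP

namespace Polynomial

theorem degree_mul_sub_mul_lt_add {R : Type*} [Ring R] [NoZeroDivisors R] {P Q u v : R[X]}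
    (hu : u.degree < P.degree) (hv : v.degree < Q.degree) :
    (u * Q - v * P).degree < P.degree + Q.degree := by
  have hP : P ≠ 0 := ne_zero_of_degree_gt hu
  have hQ : Q ≠ 0 := ne_zero_of_degree_gt hv
  refine (degree_sub_le _ _).trans_lt (max_lt ?_ ?_) <;> rw [degree_mul]
  · exact WithBot.add_lt_add_right (degree_ne_bot.2 hQ) hu
  · rw [add_comm P.degree]
    exact WithBot.add_lt_add_right (degree_ne_bot.2 hP) hv

theorem isBounded_range_eval_div_mul_one_add_abs_pow {W D : ℝ[X]} {m : ℕ}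
    (hD : ∀ x, D.eval x ≠ 0) (hdeg : W.natDegree ≤ D.natDegree + m) :
    IsBounded (range fun x => W.eval x / (D.eval x * (1 + |x| ^ m))) := by
  have hD0 : D ≠ 0 := fun h => hD 0 (by simp [h])
  have hden : ∀ x : ℝ, D.eval x * (1 + |x| ^ m) ≠ 0 :=
    fun x => mul_ne_zero (hD x) (by positivity)
  have hcont : Continuous fun x => W.eval x / (D.eval x * (1 + |x| ^ m)) := by
    fun_prop (disch := exact hden)
  rw [hcont.isBounded_range_iff_isBigO, ← Metric.cobounded_eq_cocompact]
  have hW : (fun x => W.eval x) =O[cobounded ℝ] fun x => (D * X ^ m).eval x := by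
    refine isBigO_cobounded_of_degree_le (degree_le_natDegree.trans ?_)
    rw [degree_mul, degree_X_pow, degree_eq_natDegree hD0]
    exact_mod_cast hdeg
  obtain ⟨c, hc0, hc⟩ := hW.exists_pos
  refine IsBigO.of_bound c (hc.bound.mono fun x hx => ?_)
  have hmono : |(D * X ^ m).eval x| ≤ |D.eval x * (1 + |x| ^ m)| := by
    rw [eval_mul, eval_pow, eval_X, abs_mul, abs_mul, abs_pow]
    gcongr
    rw [abs_of_pos (by positivity : (0 : ℝ) < 1 + |x| ^ m)]
    linarith
  simp only [Real.norm_eq_abs, Pi.one_apply, norm_one, mul_one, abs_div] at hx ⊢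
  rw [div_le_iff₀ (abs_pos.2 (hden x))]
  exact hx.trans (by gcongr)

theorem integrable_eval_mul_eval_div_eval_mul {S W D : ℝ[X]} {m : ℕ} {θ : ℝ → ℝ}
    (hθ : Integrable fun x => (1 + |x| ^ m) * θ x) (hD : ∀ x, D.eval x ≠ 0)
    (hdeg : S.natDegree + W.natDegree ≤ D.natDegree + m) :
    Integrable fun x => S.eval x * (W.eval x / D.eval x * θ x) := by
  obtain ⟨C, hC⟩ := isBounded_iff_forall_norm_le.1
    (isBounded_range_eval_div_mul_one_add_abs_pow hD (natDegree_mul_le.trans hdeg))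
  have hcont : Continuous fun x => (S * W).eval x / (D.eval x * (1 + |x| ^ m)) := by
    fun_prop (disch := exact fun x => mul_ne_zero (hD x) (by positivity))
  refine (hθ.bdd_mul hcont.aestronglyMeasurable
    (ae_of_all _ fun x => hC _ (mem_range_self x))).congr (ae_of_all _ fun x => ?_)
  have : (1 : ℝ) + |x| ^ m ≠ 0 := by positivity
  simp only [eval_mul]
  field_simp

theorem integral_eval_mul_eq_zero_of_moments {μ : Measure ℝ} {g : ℝ → ℝ} {m : ℕ}
    (hint : ∀ k ≤ m, Integrable (fun x => x ^ k * g x) μ)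
    (hmom : ∀ k ≤ m, ∫ x, x ^ k * g x ∂μ = 0) {S : ℝ[X]} (hS : S.natDegree ≤ m) :
    ∫ x, S.eval x * g x ∂μ = 0 := by
  have hsum : (fun x => S.eval x * g x)
      = fun x => ∑ k ∈ Finset.range (m + 1), S.coeff k * (x ^ k * g x) := by
    ext x
    rw [eval_eq_sum_range' (Nat.lt_succ_of_le hS), Finset.sum_mul]
    simp only [mul_assoc]
  have hle : ∀ k ∈ Finset.range (m + 1), k ≤ m :=
    fun k hk => Nat.lt_succ_iff.1 (Finset.mem_range.1 hk)
  rw [hsum, integral_finsetSum _ fun k hk => (hint k (hle k hk)).const_mul _]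
  exact Finset.sum_eq_zero fun k hk => by rw [integral_const_mul, hmom k (hle k hk), mul_zero]

theorem integral_eval_mul_eval_div_eval_mul_eq_zero {S W D : ℝ[X]} {m : ℕ} {θ : ℝ → ℝ}
    (hθ : Integrable fun x => (1 + |x| ^ m) * θ x) (hD : ∀ x, D.eval x ≠ 0)
    (hW : W.natDegree ≤ D.natDegree)
    (hmom : ∀ k ≤ m, ∫ x, x ^ k * (W.eval x / D.eval x * θ x) = 0) (hS : S.natDegree ≤ m) :
    ∫ x, S.eval x * (W.eval x / D.eval x * θ x) = 0 :=
  integral_eval_mul_eq_zero_of_moments (fun k hk => by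
    simpa using integrable_eval_mul_eval_div_eval_mul hθ hD (S := X ^ k) (by simp; omega))
    hmom hS

theorem eq_zero_of_integral_eval_sq_mul_eq_zero {R : ℝ[X]} {w : ℝ → ℝ} (hw : ∀ x, 0 < w x)
    (hint : Integrable fun x => R.eval x ^ 2 * w x) (h : ∫ x, R.eval x ^ 2 * w x = 0) :
    R = 0 := by
  have hae := (integral_eq_zero_iff_of_nonneg
    (fun x => mul_nonneg (sq_nonneg _) (hw x).le) hint).1 h
  have hR : (fun x => R.eval x) =ᵐ[volume] 0 :=
    hae.mono fun x hx => by simpa [(hw x).ne'] using hx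
  have hR' := (Continuous.ae_eq_iff_eq volume R.continuous continuous_const).1 hR
  exact Polynomial.funext fun x => (congrFun hR' x).trans (eval_zero).symm

theorem eq_zero_of_moments_div_eq_zero {P Q R : ℝ[X]} {d : ℕ} {θ : ℝ → ℝ}
    (hcop : IsCoprime P Q) (hPdeg : P.natDegree = d) (hQdeg : Q.natDegree = d)
    (hP : ∀ x, 0 < P.eval x) (hQ : ∀ x, Q.eval x ≠ 0) (hθpos : ∀ x, 0 < θ x)
    (hθ : Integrable fun x => (1 + |x| ^ d) * θ x) (hR : R.degree < P.degree + Q.degree)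
    (h₁ : ∀ k ≤ d, ∫ x, x ^ k * (R.eval x / (P * Q).eval x * θ x) = 0)
    (h₂ : ∀ k ≤ d, ∫ x, x ^ k * (R.eval x / (Q ^ 2).eval x * θ x) = 0) :
    R = 0 := by
  have hP0 : P ≠ 0 := fun h => by simpa [h] using (hP 0).ne'
  have hQ0 : Q ≠ 0 := fun h => hQ 0 (by simp [h])
  have hRdeg : R.natDegree ≤ 2 * d := by
    refine natDegree_le_iff_degree_le.2 (hR.le.trans ?_)
    rw [degree_eq_natDegree hP0, degree_eq_natDegree hQ0, hPdeg, hQdeg]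
    norm_cast; omega
  obtain ⟨A, B, hAB, hA, hB⟩ := hcop.exists_mul_add_mul_eq_of_degree_lt hR
  have hAdeg : A.natDegree ≤ d :=
    hQdeg ▸ natDegree_le_of_degree_le (hA.le.trans degree_le_natDegree)
  have hBdeg : B.natDegree ≤ d :=
    hPdeg ▸ natDegree_le_of_degree_le (hB.le.trans degree_le_natDegree)
  have hPQ : ∀ x, (P * Q).eval x ≠ 0 := fun x => by simp [(hP x).ne', hQ x]
  have hQQ : ∀ x, (Q ^ 2).eval x ≠ 0 := fun x => by simp [hQ x]
  have hPQQ : ∀ x, 0 < (P * Q ^ 2).eval x := fun x => by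
    simp only [eval_mul, eval_pow]; exact mul_pos (hP x) (sq_pos_of_ne_zero (hQ x))
  have hsplit : ∀ x, R.eval x ^ 2 * (θ x / (P * Q ^ 2).eval x)
      = A.eval x * (R.eval x / (Q ^ 2).eval x * θ x)
        + B.eval x * (R.eval x / (P * Q).eval x * θ x) := fun x => by
    have hRx : R.eval x = A.eval x * P.eval x + B.eval x * Q.eval x := by
      rw [← hAB, eval_add, eval_mul, eval_mul]
    have := (hP x).ne'
    have := hQ x
    simp only [eval_mul, eval_pow]
    rw [hRx]
    field_simp
  have hRR : ∫ x, R.eval x ^ 2 * (θ x / (P * Q ^ 2).eval x) = 0 := by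
    simp_rw [hsplit]
    rw [integral_add
      (integrable_eval_mul_eval_div_eval_mul hθ hQQ (by rw [natDegree_pow]; omega))
      (integrable_eval_mul_eval_div_eval_mul hθ hPQ (by rw [natDegree_mul hP0 hQ0]; omega)),
      integral_eval_mul_eval_div_eval_mul_eq_zero hθ hQQ (by rw [natDegree_pow]; omega) h₂
        hAdeg,
      integral_eval_mul_eval_div_eval_mul_eq_zero hθ hPQ (by rw [natDegree_mul hP0 hQ0]; omega)
        h₁ hBdeg, add_zero]
  have hRint : Integrable fun x => R.eval x ^ 2 * (θ x / (P * Q ^ 2).eval x) :=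
    (integrable_eval_mul_eval_div_eval_mul hθ (fun x => (hPQQ x).ne') (S := R) (W := R)
      (by rw [natDegree_mul hP0 (pow_ne_zero 2 hQ0), natDegree_pow]; omega)).congr
      (ae_of_all _ fun x => by ring)
  exact eq_zero_of_integral_eval_sq_mul_eq_zero (fun x => div_pos (hθpos x) (hPQQ x)) hRint hRR

end Polynomial

theorem jacobian_kernel_trivial_of_coprime_general
    (n : ℕ)
    (P Q : Polynomial ℝ) (hcop : IsCoprime P Q)
    (hPdeg : P.natDegree = 2 * n) (hQdeg : Q.natDegree = 2 * n)
    (hPpos : ∀ x : ℝ, 0 < P.eval x) (hQpos : ∀ x : ℝ, 0 < Q.eval x)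
    (θ : ℝ → ℝ) (hθpos : ∀ x, 0 < θ x)
    (hθint : Integrable (fun x : ℝ => (1 + |x| ^ (2 * n)) * θ x))
    (u v : Polynomial ℝ)
    (hu : u ∈ Polynomial.degreeLT ℝ (2 * n)) (hv : v ∈ Polynomial.degreeLT ℝ (2 * n))
    (h1 : ∀ k ≤ 2 * n,
      ∫ x : ℝ, x ^ k * (u.eval x / P.eval x - v.eval x / Q.eval x) * θ x = 0)
    (h2 : ∀ k ≤ 2 * n,
      ∫ x : ℝ, x ^ k * (u.eval x * Q.eval x - v.eval x * P.eval x) * θ x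
        / (Q.eval x) ^ 2 = 0) :
    u = 0 ∧ v = 0 := by
  have hP0 : P ≠ 0 := fun h => by simpa [h] using (hPpos 0).ne'
  have hQ0 : Q ≠ 0 := fun h => by simpa [h] using (hQpos 0).ne'
  rw [mem_degreeLT, ← hPdeg, ← degree_eq_natDegree hP0] at hu
  rw [mem_degreeLT, ← hQdeg, ← degree_eq_natDegree hQ0] at hv
  have hR0 : u * Q - v * P = 0 := by
    refine eq_zero_of_moments_div_eq_zero hcop hPdeg hQdeg hPpos (fun x => (hQpos x).ne')
      hθpos hθint (degree_mul_sub_mul_lt_add hu hv) (fun k hk => ?_) (fun k hk => ?_)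
    · rw [← h1 k hk]
      congr 1 with x
      have := (hPpos x).ne'
      have := (hQpos x).ne'
      simp only [eval_mul, eval_sub]
      field_simp
    · rw [← h2 k hk]
      congr 1 with x
      simp only [eval_mul, eval_sub, eval_pow]
      ring
  exact hcop.eq_zero_of_mul_eq_mul_of_degree_lt hu (sub_eq_zero.1 hR0)

/-- Kernel triviality: at a coprime positive pair `(P,Q)` of degree-`2n` polynomials, the
only direction `(u,v) ∈ V_{2n−1} × V_{2n−1}` annihilated by the Jacobians of both the
generalized logarithmic moment map and the power moment map is `(0,0)`. -/
theorem jacobian_kernel_trivial_of_coprime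
    (n : ℕ) (hn : 1 ≤ n)
    (P Q : Polynomial ℝ) (hcop : IsCoprime P Q)
    (hPdeg : P.natDegree = 2 * n) (hQdeg : Q.natDegree = 2 * n)
    (hPpos : ∀ x : ℝ, 0 < P.eval x) (hQpos : ∀ x : ℝ, 0 < Q.eval x)
    (θ : ℝ → ℝ) (hθmeas : Measurable θ) (hθpos : ∀ x, 0 < θ x)
    (hθint : Integrable (fun x : ℝ => (1 + |x| ^ (2 * n)) * θ x))
    (u v : Polynomial ℝ)
    (hu : u ∈ Polynomial.degreeLT ℝ (2 * n)) (hv : v ∈ Polynomial.degreeLT ℝ (2 * n))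
    (h1 : ∀ k ≤ 2 * n,
      ∫ x : ℝ, x ^ k * (u.eval x / P.eval x - v.eval x / Q.eval x) * θ x = 0)
    (h2 : ∀ k ≤ 2 * n,
      ∫ x : ℝ, x ^ k * (u.eval x * Q.eval x - v.eval x * P.eval x) * θ x
        / (Q.eval x) ^ 2 = 0) :
    u = 0 ∧ v = 0 :=
  jacobian_kernel_trivial_of_coprime_general n P Q hcop hPdeg hQdeg hPpos hQpos θ hθpos hθint u v hu
    hv h1 h2
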